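/- arXiv:math/0109093 — 3 statements merged into one kernel-verified Lean document; each statement's English description precedes it below -/
import Mathlib

section
/- Let p, q ≥ 1 and let λ = (λ_1, …, λ_p) be a partition (parts possibly zero) contained in the rectangle p×q. Then the product of all hook lengths of the rectangular shape p×q satisfies H_{p×q} = (−1)^{|λ|} · H_λ · H_{λ̃} · s_λ(1^p) · s_λ(1^{−q}), where λ̃ is the complementary partition defined by λ̃_i = q − λ_{p+1−i}. -/
/-!
With the beta-numbers `β_i = λ_i + p - 1 - i` and `Δ(β) = ∏_{j < i} (β_j - β_i)`, Frobenius'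
form of the hook length formula reads `H_λ Δ(β) = ∏ β_i!`; it follows by removing the first
row, whose hook lengths together with the gaps `β_0 - β_k` fill `{1, …, β_0}`. The
beta-numbers of `λ̃` are `p + q - 1 - β_{p-1-i}`, so `λ` and `λ̃` share `Δ`. Row by row,
`H_λ s_λ(1^p) = ∏ β_i! / (p-1-i)!` and `H_λ s_λ(1^{-q}) = (-1)^{|λ|} ∏ (q+i)! / (q+i-λ_i)!`,
while `H_{p×q} = ∏ (q+i)! / i!`; multiplying out, everything else cancels.
-/

/-- The `j`-th part (0-indexed) of the conjugate of the partition whose parts are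
listed by `L`. -/
def conjPart (L : List ℕ) (j : ℕ) : ℕ :=
  ((List.range L.length).filter (fun i => j < L.getD i 0)).length

/-- The hook length of the (0-indexed) cell `(i,j)` of the partition listed by `L`:
`λ_i + λ'_j - i - j - 1` (0-indexed version of `λ_i + λ'_j - i - j + 1`). -/
def hookLen (L : List ℕ) (i j : ℕ) : ℤ :=
  (L.getD i 0 : ℤ) + (conjPart L j : ℤ) - (i : ℤ) - (j : ℤ) - 1

/-- `H_λ`: the product of all hook lengths of the partition listed by `L`. -/
def hookProd (L : List ℕ) : ℚ :=
  ∏ i ∈ Finset.range L.length, ∏ j ∈ Finset.range (L.getD i 0), (hookLen L i j : ℚ)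

/-- The principal specialization `s_λ(1^t) = ∏_{u ∈ λ} (t + c(u))/h(u)` of the Schur
function of the partition listed by `L`, where `c(u) = j - i` is the content. -/
def schurSpec (L : List ℕ) (t : ℚ) : ℚ :=
  ∏ i ∈ Finset.range L.length, ∏ j ∈ Finset.range (L.getD i 0),
    (t + ((j : ℚ) - (i : ℚ))) / (hookLen L i j : ℚ)

open Finset
open scoped Nat

lemma conjPart_eq_card (L : List ℕ) (j : ℕ) :
    conjPart L j = #{i ∈ range L.length | j < L.getD i 0} := rfl

lemma conjPart_le_length (L : List ℕ) (j : ℕ) : conjPart L j ≤ L.length :=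
  (card_filter_le _ _).trans (card_range _).le

lemma conjPart_antitone (L : List ℕ) : Antitone (conjPart L) := fun j j' h => by
  simp only [conjPart_eq_card]
  exact card_le_card (monotone_filter_right _ fun _ _ => h.trans_lt)

lemma conjPart_cons (a : ℕ) (M : List ℕ) (j : ℕ) :
    conjPart (a :: M) j = (if j < a then 1 else 0) + conjPart M j := by
  simp only [conjPart_eq_card, card_filter, List.length_cons, sum_range_succ',
    List.getD_cons_succ, List.getD_cons_zero]
  omega

lemma antitone_getD_of_pairwise {L : List ℕ} (hs : L.Pairwise (· ≥ ·)) :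
    Antitone (L.getD · 0) := by
  intro i j hij
  change L.getD j 0 ≤ L.getD i 0
  rcases hij.eq_or_lt with rfl | hlt
  · rfl
  by_cases hj : j < L.length
  · simp only [List.getD_eq_getElem _ _ hj, List.getD_eq_getElem _ _ (hlt.trans hj)]
    exact List.pairwise_iff_getElem.1 hs _ _ _ _ hlt
  · rw [List.getD_eq_default _ _ (not_lt.1 hj)]
    exact Nat.zero_le _

lemma getD_le_of_forall_le {L : List ℕ} {q : ℕ} (hq : ∀ a ∈ L, a ≤ q) (i : ℕ) :
    L.getD i 0 ≤ q := by
  by_cases hi : i < L.length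
  · rw [List.getD_eq_getElem _ _ hi]
    exact hq _ (List.getElem_mem hi)
  · rw [List.getD_eq_default _ _ (not_lt.1 hi)]
    exact Nat.zero_le _

lemma lt_conjPart_iff {L : List ℕ} (hs : L.Pairwise (· ≥ ·)) {i j : ℕ} :
    i < conjPart L j ↔ j < L.getD i 0 := by
  have hanti := antitone_getD_of_pairwise hs
  rw [conjPart_eq_card]
  constructor
  · intro h
    by_contra! hj
    have : {k ∈ range L.length | j < L.getD k 0} ⊆ range i := fun k hk => by
      simp only [mem_filter, mem_range] at hk ⊢
      by_contra! hik
      exact (hk.2.trans_le (hanti hik)).not_ge hj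
    simpa using h.trans_le (card_le_card this)
  · intro hj
    have hi : i < L.length := by
      by_contra! hi
      rw [List.getD_eq_default _ _ hi] at hj
      exact Nat.not_lt_zero _ hj
    have : range (i + 1) ⊆ {k ∈ range L.length | j < L.getD k 0} := fun k hk => by
      simp only [mem_filter, mem_range] at hk ⊢
      exact ⟨by omega, hj.trans_le (hanti (by omega))⟩
    simpa using card_le_card this

lemma hookLen_pos {L : List ℕ} (hs : L.Pairwise (· ≥ ·)) {i j : ℕ} (hj : j < L.getD i 0) :
    0 < hookLen L i j := by
  have := (lt_conjPart_iff hs).2 hj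
  unfold hookLen
  omega

lemma hookLen_cons_succ {a j : ℕ} (M : List ℕ) (i : ℕ) (hj : j < a) :
    hookLen (a :: M) (i + 1) j = hookLen M i j := by
  simp only [hookLen, List.getD_cons_succ, conjPart_cons, if_pos hj]
  push_cast
  ring

lemma hookProd_cons {a : ℕ} {M : List ℕ} (hs : (a :: M).Pairwise (· ≥ ·)) :
    hookProd (a :: M) = (∏ j ∈ range a, (hookLen (a :: M) 0 j : ℚ)) * hookProd M := by
  rw [hookProd, List.length_cons, prod_range_succ', mul_comm]
  congr 1
  refine prod_congr rfl fun i _ => prod_congr rfl fun j hj => ?_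
  have hle : M.getD i 0 ≤ a := antitone_getD_of_pairwise hs (Nat.zero_le (i + 1))
  rw [hookLen_cons_succ M i ((mem_range.1 hj).trans_le hle)]

lemma schurSpec_mul_hookProd {L : List ℕ} (hs : L.Pairwise (· ≥ ·)) (t : ℚ) :
    schurSpec L t * hookProd L
      = ∏ i ∈ range L.length, ∏ j ∈ range (L.getD i 0), (t + ((j : ℚ) - (i : ℚ))) := by
  rw [schurSpec, hookProd, ← prod_mul_distrib]
  refine prod_congr rfl fun i _ => ?_
  rw [← prod_mul_distrib]
  refine prod_congr rfl fun j hj => div_mul_cancel₀ _ ?_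
  exact_mod_cast (hookLen_pos hs (mem_range.1 hj)).ne'

def diffProd (f : ℕ → ℚ) (n : ℕ) : ℚ :=
  ∏ i ∈ range n, ∏ j ∈ range i, (f j - f i)

lemma diffProd_congr {f g : ℕ → ℚ} {n : ℕ} (h : ∀ i < n, f i = g i) :
    diffProd f n = diffProd g n :=
  prod_congr rfl fun i hi => prod_congr rfl fun j hj => by
    rw [h i (mem_range.1 hi), h j ((mem_range.1 hj).trans (mem_range.1 hi))]

lemma diffProd_succ (f : ℕ → ℚ) (n : ℕ) :
    diffProd f (n + 1) = diffProd f n * ∏ j ∈ range n, (f j - f n) :=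
  prod_range_succ _ _

lemma diffProd_succ' (f : ℕ → ℚ) (n : ℕ) :
    diffProd f (n + 1) = diffProd (fun i => f (i + 1)) n * ∏ k ∈ range n, (f 0 - f (k + 1)) := by
  rw [diffProd, diffProd, prod_range_succ', range_zero, prod_empty, mul_one, ← prod_mul_distrib]
  exact prod_congr rfl fun i _ => prod_range_succ' _ _

lemma diffProd_reflect (f : ℕ → ℚ) (c : ℚ) (n : ℕ) :
    diffProd (fun i => c - f (n - 1 - i)) n = diffProd f n := by
  induction n generalizing f with
  | zero => rfl
  | succ n ih =>
    rw [diffProd_succ, diffProd_succ', ← ih (fun i => f (i + 1))]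
    congr 1
    · exact diffProd_congr fun i hi => by rw [show n + 1 - 1 - i = n - 1 - i + 1 by omega]
    · rw [← prod_range_reflect]
      refine prod_congr rfl fun k hk => ?_
      rw [show n + 1 - 1 - (n - 1 - k) = k + 1 by have := mem_range.1 hk; omega]
      simp

lemma diffProd_const_sub (c : ℚ) (n : ℕ) :
    diffProd (fun i => c - i) n = ∏ i ∈ range n, (i ! : ℚ) := by
  refine prod_congr rfl fun i _ => ?_
  rw [← prod_range_reflect, ← prod_range_add_one_eq_factorial, Nat.cast_prod]
  refine prod_congr rfl fun j hj => ?_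
  simp only [Nat.cast_sub (show j ≤ i - 1 by have := mem_range.1 hj; omega),
    Nat.cast_sub (show 1 ≤ i by have := mem_range.1 hj; omega)]
  push_cast
  ring

def betaNumber (L : List ℕ) (i : ℕ) : ℕ := L.getD i 0 + (L.length - 1 - i)

lemma betaNumber_cons_succ (a : ℕ) (M : List ℕ) (i : ℕ) :
    betaNumber (a :: M) (i + 1) = betaNumber M i := by
  simp only [betaNumber, List.getD_cons_succ, List.length_cons]
  omega

lemma prod_mul_prod_eq_factorial {S T : Finset ℤ} {N : ℕ} (hST : Disjoint S T)
    (hS : S ⊆ Icc 1 (N : ℤ)) (hT : T ⊆ Icc 1 (N : ℤ)) (hcard : #S + #T = N) :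
    (∏ x ∈ S, x) * ∏ x ∈ T, x = N ! := by
  have hunion : S ∪ T = Icc 1 (N : ℤ) := eq_of_subset_of_card_le (union_subset hS hT) <| by
    rw [card_union_of_disjoint hST, Int.card_Icc]
    omega
  rw [← prod_union hST, hunion, Int.Icc_eq_finset_map, prod_map,
    show (N + 1 - 1 : ℤ).toNat = N by omega, ← prod_range_add_one_eq_factorial, Nat.cast_prod]
  refine prod_congr rfl fun i _ => ?_
  simp [add_comm]

lemma hookLen_cons_zero (a : ℕ) (M : List ℕ) (j : ℕ) :
    hookLen (a :: M) 0 j = a + conjPart (a :: M) j - j - 1 := by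
  simp [hookLen]

lemma betaNumber_cons_zero_sub_succ (a : ℕ) (M : List ℕ) {k : ℕ} (hk : k < M.length) :
    (betaNumber (a :: M) 0 : ℤ) - betaNumber (a :: M) (k + 1) = a - M.getD k 0 + (k + 1) := by
  rw [betaNumber_cons_succ, betaNumber, betaNumber, List.getD_cons_zero, List.length_cons]
  omega

lemma hookLen_zero_ne_betaNumber_sub {a : ℕ} {M : List ℕ} (hs : (a :: M).Pairwise (· ≥ ·))
    (j : ℕ) {k : ℕ} (hk : k < M.length) :
    hookLen (a :: M) 0 j ≠ (betaNumber (a :: M) 0 : ℤ) - betaNumber (a :: M) (k + 1) := by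
  have := (lt_conjPart_iff hs (i := k + 1) (j := j)).not
  rw [List.getD_cons_succ] at this
  rw [hookLen_cons_zero, betaNumber_cons_zero_sub_succ a M hk]
  omega

/-- The first-row hook lengths and the gaps `β_0 - β_k` (`k ≥ 1`) are exactly the numbers
`1, …, β_0`, each once (Macdonald I.1.7). -/
lemma prod_hookLen_zero_mul_prod_betaNumber_sub {a : ℕ} {M : List ℕ}
    (hs : (a :: M).Pairwise (· ≥ ·)) :
    (∏ j ∈ range a, hookLen (a :: M) 0 j) *
        ∏ k ∈ range M.length, ((betaNumber (a :: M) 0 : ℤ) - betaNumber (a :: M) (k + 1)) =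
      (betaNumber (a :: M) 0)! := by
  have hrow (k : ℕ) : M.getD k 0 ≤ a := antitone_getD_of_pairwise hs (Nat.zero_le (k + 1))
  have hβ0 : betaNumber (a :: M) 0 = a + M.length := by simp [betaNumber]
  have hanti : StrictAntiOn (hookLen (a :: M) 0) (range a) := fun j _ j' _ hjj' => by
    have := conjPart_antitone (a :: M) hjj'.le
    rw [hookLen_cons_zero, hookLen_cons_zero]
    omega
  have hmono : StrictMonoOn (fun k => (betaNumber (a :: M) 0 : ℤ) - betaNumber (a :: M) (k + 1))
      (range M.length) := fun k hk k' hk' hkk' => by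
    have : M.getD k' 0 ≤ M.getD k 0 := antitone_getD_of_pairwise hs.of_cons hkk'.le
    simp only [coe_range, Set.mem_Iio] at hk hk'
    simp only [betaNumber_cons_zero_sub_succ a M hk, betaNumber_cons_zero_sub_succ a M hk']
    omega
  set S := (range a).image (hookLen (a :: M) 0)
  set T := (range M.length).image
    fun k => (betaNumber (a :: M) 0 : ℤ) - betaNumber (a :: M) (k + 1)
  have hST : Disjoint S T := by
    simp only [S, T, disjoint_left, mem_image, mem_range, not_exists, not_and]
    rintro _ ⟨j, -, rfl⟩ k hk hjk
    exact hookLen_zero_ne_betaNumber_sub hs j hk hjk.symm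
  have hS : S ⊆ Icc 1 ((a + M.length : ℕ) : ℤ) := image_subset_iff.2 fun j hj => by
    have hpos := hookLen_pos hs (i := 0) (mem_range.1 hj)
    have hconj : conjPart (a :: M) j ≤ M.length + 1 := conjPart_le_length _ j
    rw [hookLen_cons_zero] at hpos
    rw [mem_Icc, hookLen_cons_zero]
    omega
  have hT : T ⊆ Icc 1 ((a + M.length : ℕ) : ℤ) := image_subset_iff.2 fun k hk => by
    have := hrow k
    rw [mem_range] at hk
    rw [mem_Icc, betaNumber_cons_zero_sub_succ a M hk]
    omega
  have hcard : #S + #T = a + M.length := by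
    rw [card_image_of_injOn hanti.injOn, card_image_of_injOn hmono.injOn, card_range,
      card_range]
  have key := prod_mul_prod_eq_factorial hST hS hT hcard
  rwa [prod_image hanti.injOn, prod_image hmono.injOn, ← hβ0] at key

theorem hookProd_mul_diffProd_betaNumber {L : List ℕ} (hs : L.Pairwise (· ≥ ·)) :
    hookProd L * diffProd (betaNumber L ·) L.length =
      ∏ i ∈ range L.length, ((betaNumber L i)! : ℚ) := by
  induction L with
  | nil => simp [hookProd, diffProd]
  | cons a M ih =>
    have hrow : ((∏ j ∈ range a, (hookLen (a :: M) 0 j : ℚ)) *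
        ∏ k ∈ range M.length, ((betaNumber (a :: M) 0 : ℚ) - betaNumber (a :: M) (k + 1))) =
          (betaNumber (a :: M) 0)! := by
      exact_mod_cast prod_hookLen_zero_mul_prod_betaNumber_sub hs
    simp only [List.length_cons, hookProd_cons hs, diffProd_succ', prod_range_succ' _ M.length,
      betaNumber_cons_succ, ← ih hs.of_cons, ← hrow]
    ring

lemma prod_add_sub_mul_factorial {n i : ℕ} (hi : i < n) (a : ℕ) :
    (∏ j ∈ range a, ((n : ℚ) + ((j : ℚ) - (i : ℚ)))) * ((n - 1 - i)! : ℚ) =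
      ((n - 1 - i + a)! : ℚ) := by
  rw [← Nat.factorial_mul_ascFactorial, Nat.ascFactorial_eq_prod_range, mul_comm]
  push_cast
  congr 1
  refine prod_congr rfl fun j _ => ?_
  rw [Nat.cast_sub (by omega), Nat.cast_sub (by omega)]
  push_cast
  ring

lemma prod_neg_add_sub_mul_factorial {m i a : ℕ} (ha : a ≤ m + i) :
    (∏ j ∈ range a, (-(m : ℚ) + ((j : ℚ) - (i : ℚ)))) * ((m + i - a)! : ℚ) =
      (-1) ^ a * ((m + i)! : ℚ) := by
  have hfactor (j : ℕ) (hj : j ∈ range a) :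
      -(m : ℚ) + ((j : ℚ) - (i : ℚ)) = -1 * ((m + i - j : ℕ) : ℚ) := by
    rw [Nat.cast_sub (by have := mem_range.1 hj; omega)]
    push_cast
    ring
  rw [prod_congr rfl hfactor, prod_mul_distrib, prod_const, card_range,
    ← Nat.factorial_mul_descFactorial ha, Nat.descFactorial_eq_prod_range]
  push_cast
  ring

lemma List.sum_eq_sum_range_getD (L : List ℕ) :
    L.sum = ∑ i ∈ Finset.range L.length, L.getD i 0 := by
  induction L with
  | nil => rfl
  | cons a M ih => rw [List.sum_cons, ih, List.length_cons, Finset.sum_range_succ', add_comm]; rfl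

lemma schurSpec_length_mul {L : List ℕ} (hs : L.Pairwise (· ≥ ·)) :
    schurSpec L L.length * hookProd L * ∏ i ∈ range L.length, (i ! : ℚ) =
      ∏ i ∈ range L.length, ((betaNumber L i)! : ℚ) := by
  rw [schurSpec_mul_hookProd hs, ← prod_range_reflect (fun i => (i ! : ℚ)), ← prod_mul_distrib]
  refine prod_congr rfl fun i hi => ?_
  rw [prod_add_sub_mul_factorial (mem_range.1 hi), betaNumber, add_comm]

lemma schurSpec_neg_mul {L : List ℕ} (hs : L.Pairwise (· ≥ ·)) {m : ℕ} (hm : ∀ a ∈ L, a ≤ m) :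
    schurSpec L (-(m : ℚ)) * hookProd L * ∏ i ∈ range L.length, ((m + i - L.getD i 0)! : ℚ) =
      (-1) ^ L.sum * ∏ i ∈ range L.length, ((m + i)! : ℚ) := by
  rw [schurSpec_mul_hookProd hs, ← prod_mul_distrib, L.sum_eq_sum_range_getD,
    ← prod_pow_eq_pow_sum, ← prod_mul_distrib]
  exact prod_congr rfl fun i _ =>
    prod_neg_add_sub_mul_factorial ((getD_le_of_forall_le hm i).trans (Nat.le_add_right m i))

lemma betaNumber_complement_add {L : List ℕ} {m : ℕ} (hm : ∀ a ∈ L, a ≤ m) {i : ℕ}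
    (hi : i < L.length) :
    betaNumber (L.map (fun a => m - a)).reverse i + betaNumber L (L.length - 1 - i) =
      L.length + m - 1 := by
  have hget : ((L.map (fun a => m - a)).reverse).getD i 0 = m - L.getD (L.length - 1 - i) 0 := by
    rw [List.getD_eq_getElem _ _ (by simpa using hi), List.getD_eq_getElem _ _ (by omega)]
    simp
  have := getD_le_of_forall_le hm (L.length - 1 - i)
  simp only [betaNumber, hget, List.length_reverse, List.length_map]
  omega

lemma hookProd_complement_mul_diffProd {L : List ℕ} (hs : L.Pairwise (· ≥ ·)) {m : ℕ}
    (hm : ∀ a ∈ L, a ≤ m) :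
    hookProd (L.map (fun a => m - a)).reverse * diffProd (betaNumber L ·) L.length =
      ∏ i ∈ range L.length, ((m + i - L.getD i 0)! : ℚ) := by
  set C := (L.map (fun a => m - a)).reverse
  have hCs : C.Pairwise (· ≥ ·) := by
    simpa [C, List.pairwise_reverse, List.pairwise_map] using
      hs.imp fun h => Nat.sub_le_sub_left h m
  have hCβ (i : ℕ) (hi : i < L.length) :
      (betaNumber C i : ℚ) = ((L.length + m - 1 : ℕ) : ℚ) - betaNumber L (L.length - 1 - i) := by
    rw [← betaNumber_complement_add hm hi]
    push_cast
    ring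
  have hC := hookProd_mul_diffProd_betaNumber hCs
  rw [show C.length = L.length by simp [C], diffProd_congr hCβ,
    diffProd_reflect (betaNumber L ·)] at hC
  rw [hC, ← prod_range_reflect (fun i => ((m + i - L.getD i 0)! : ℚ))]
  refine prod_congr rfl fun i hi => ?_
  rw [mem_range] at hi
  have hsum : betaNumber C i + betaNumber L (L.length - 1 - i) = L.length + m - 1 :=
    betaNumber_complement_add hm hi
  have hβ : betaNumber L (L.length - 1 - i) = L.getD (L.length - 1 - i) 0 + i := by
    rw [betaNumber]
    omega
  have := getD_le_of_forall_le hm (L.length - 1 - i)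
  congr 2
  omega

lemma hookProd_replicate_mul (n m : ℕ) :
    hookProd (List.replicate n m) * ∏ i ∈ range n, (i ! : ℚ) =
      ∏ i ∈ range n, ((m + i)! : ℚ) := by
  have hR := hookProd_mul_diffProd_betaNumber (List.pairwise_replicate.2 (Or.inr le_rfl) :
    (List.replicate n m).Pairwise (· ≥ ·))
  have hβ (i : ℕ) (hi : i < n) :
      (betaNumber (List.replicate n m) i : ℚ) = ((m + n - 1 : ℕ) : ℚ) - i := by
    rw [betaNumber, List.getD_eq_getElem _ _ (by simpa using hi), List.getElem_replicate,
      List.length_replicate, eq_sub_iff_add_eq, ← Nat.cast_add]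
    congr 1
    omega
  rw [List.length_replicate, diffProd_congr hβ, diffProd_const_sub] at hR
  rw [hR, ← prod_range_reflect]
  refine prod_congr rfl fun i hi => ?_
  rw [mem_range] at hi
  rw [betaNumber, List.getD_eq_getElem _ _ (by simp; omega), List.getElem_replicate,
    List.length_replicate, show n - 1 - (n - 1 - i) = i by omega]

theorem hook_product_complement_general (p q : ℕ) (L : List ℕ)
    (hlen : L.length = p) (hsort : L.Pairwise (· ≥ ·)) (hle : ∀ a ∈ L, a ≤ q) :
    hookProd (List.replicate p q)
      = (-1 : ℚ) ^ L.sum * hookProd L * hookProd ((L.map (fun a => q - a)).reverse)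
        * schurSpec L (p : ℚ) * schurSpec L (-(q : ℚ)) := by
  subst hlen
  have hR := hookProd_replicate_mul L.length q
  have hF := hookProd_mul_diffProd_betaNumber hsort
  have hC := hookProd_complement_mul_diffProd hsort hle
  have hP := schurSpec_length_mul hsort
  have hQ := schurSpec_neg_mul hsort hle
  have hsign : ((-1 : ℚ) ^ L.sum) ^ 2 = 1 := by
    rw [← pow_mul, mul_comm, pow_mul, neg_one_sq, one_pow]
  have hD : ∏ i ∈ range L.length, (i ! : ℚ) ≠ 0 := prod_ne_zero_iff.2 fun i _ => by positivity
  refine mul_right_cancel₀ hD ?_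
  set ε := (-1 : ℚ) ^ L.sum
  set sQ := schurSpec L (-(q : ℚ))
  set HC := hookProd ((L.map (fun a => q - a)).reverse)
  -- `H_{p×q} D = ∏ (q+i)! = ε s_λ(1^{-q}) H_λ ∏ (q+i-λ_i)! = ε s_λ(1^{-q}) H_λ̃ (H_λ Δ(β))`
  -- and `H_λ Δ(β) = ∏ β_i! = s_λ(1^p) H_λ D`, where `D = ∏ i!`.
  linear_combination hR - ε * HC * sQ * hP + ε * HC * sQ * hF - ε * sQ * hookProd L * hC
    - ε * hQ - (∏ i ∈ range L.length, ((q + i)! : ℚ)) * hsign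

/-- **Lemma.** For `λ ⊆ p × q` (listed as `L = (λ_1, …, λ_p)`, parts possibly zero),
`H_{p×q} = (-1)^{|λ|} H_λ H_{λ̃} s_λ(1^p) s_λ(1^{-q})`, where `λ̃_i = q - λ_{p+1-i}`. -/
theorem hook_product_complement (p q : ℕ) (hp : 1 ≤ p) (hq : 1 ≤ q) (L : List ℕ)
    (hlen : L.length = p) (hsort : L.Pairwise (· ≥ ·)) (hle : ∀ a ∈ L, a ≤ q) :
    hookProd (List.replicate p q)
      = (-1 : ℚ) ^ L.sum * hookProd L * hookProd ((L.map (fun a => q - a)).reverse)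
        * schurSpec L (p : ℚ) * schurSpec L (-(q : ℚ)) :=
  hook_product_complement_general p q L hlen hsort hle
end

section
/- Let p, q ≥ 1 and let μ be a partition of k with k ≤ pq. Then the value of the irreducible character of S_{pq} indexed by the rectangle p×q satisfies χ^{p×q}(μ, 1^{pq−k}) = Σ_λ χ^λ(μ) · f^{λ̃}, where the sum is over all partitions λ of k contained in the rectangle p×q, and λ̃ is the complementary partition λ̃_i = q − λ_{p+1−i} (taking λ = (λ_1,…,λ_p) with parts possibly zero). -/
open MvPolynomial

/-- The Vandermonde product `∏_{i<j} (x_i - x_j)`. -/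
noncomputable def vandermondeMv (r : ℕ) : MvPolynomial (Fin r) ℤ :=
  ∏ p ∈ Finset.univ.filter (fun p : Fin r × Fin r => p.1 < p.2), (X p.1 - X p.2)

/-- The power sum `x_1^a + ⋯ + x_r^a`. -/
noncomputable def powerSumMv (r : ℕ) (a : ℕ) : MvPolynomial (Fin r) ℤ :=
  ∑ i : Fin r, X i ^ a

/-- Frobenius character formula definition of the irreducible symmetric group character
`χ^λ(μ)`: the coefficient of `x^{λ+δ}` in `(∏_{i<j}(x_i-x_j)) · p_μ`, where `L` lists the
parts of `λ` (weakly decreasing, zeros allowed) and `μ` is the multiset of cycle lengths. -/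
noncomputable def symChar (L : List ℕ) (μ : Multiset ℕ) : ℤ :=
  MvPolynomial.coeff
    (Finsupp.equivFunOnFinite.symm
      (fun i : Fin L.length => L.get i + (L.length - 1 - (i : ℕ))))
    (vandermondeMv L.length * (μ.map (powerSumMv L.length)).prod)

/-!
Write `δ = (r - 1, …, 1, 0)`, so that `symChar λ ν` is the coefficient of `x^(λ + δ)` in
`Δ · p_ν`. The left side is the coefficient of `x^(q^p + δ)` in `(Δ p_μ) · p_1^(pq - k)`.
Expanding this product, `Δ p_μ` is alternating, so only exponents `a` with distinct entries
contribute; each is uniquely `σ(λ + δ)` with `λ` a partition, which then lies in the `p × q` box,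
and its coefficient is `sign σ · χ^λ(μ)`. For fixed `λ`, the substitution `σ ↦ w₀ σ⁻¹ w₀` turns the
sum over `σ` of the matching coefficients of the symmetric `p_1^(pq - k)` into the Vandermonde
expansion of the coefficient of `x^(λ̃ + δ)` in `Δ · p_1^(pq - k)`, which is `f^λ̃`. Homogeneity
discards the `λ` with `|λ| ≠ k`.
-/

open Finset Equiv

namespace RectangularCharacter

theorem coe_mapDomain_equiv {α β M : Type*} [AddCommMonoid M] (d : α →₀ M) (e : α ≃ β) :
    ⇑(d.mapDomain e) = d ∘ e.symm :=
  funext fun j => Finsupp.mapDomain_equiv_apply d j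

section Alternating

theorem _root_.MvPolynomial.IsSymmetric.coeff_mapDomain {ι R : Type*} [CommSemiring R]
    {T : MvPolynomial ι R} (hT : T.IsSymmetric) (π : Perm ι) (d : ι →₀ ℕ) :
    coeff (d.mapDomain π) T = coeff d T := by
  rw [← coeff_rename_mapDomain π π.injective T d, hT π]

variable {ι : Type*} [Fintype ι] [DecidableEq ι]

def IsAlternating (P : MvPolynomial ι ℤ) : Prop :=
  ∀ π : Perm ι, rename π P = (Perm.sign π : ℤ) • P

theorem IsAlternating.mul_isSymmetric {A S : MvPolynomial ι ℤ} (hA : IsAlternating A)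
    (hS : S.IsSymmetric) : IsAlternating (A * S) := fun π => by
  rw [map_mul, hA π, hS π, smul_mul_assoc]

theorem IsAlternating.coeff_mapDomain {A : MvPolynomial ι ℤ} (hA : IsAlternating A)
    (π : Perm ι) (d : ι →₀ ℕ) :
    coeff (d.mapDomain π) A = Perm.sign π * coeff d A := by
  have h := coeff_rename_mapDomain π π.injective A d
  rw [hA π, coeff_smul, smul_eq_mul] at h
  rw [← h, ← mul_assoc, ← Units.val_mul, Int.units_mul_self, Units.val_one, one_mul]

theorem IsAlternating.coeff_eq_zero_of_not_injective {A : MvPolynomial ι ℤ}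
    (hA : IsAlternating A) {d : ι →₀ ℕ} (hd : ¬ Function.Injective d) : coeff d A = 0 := by
  obtain ⟨i, j, hdij, hij⟩ := Function.not_injective_iff.mp hd
  have hswap : d.mapDomain (swap i j) = d := by
    ext x
    rw [Finsupp.mapDomain_equiv_apply, symm_swap]
    rcases eq_or_ne x i with rfl | hxi
    · simp [hdij]
    rcases eq_or_ne x j with rfl | hxj
    · simp [hdij]
    · rw [swap_apply_of_ne_of_ne hxi hxj]
  have h := hA.coeff_mapDomain (swap i j) d
  rw [hswap, Perm.sign_swap hij] at h
  simp only [Units.val_neg, Units.val_one, neg_mul, one_mul] at h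
  omega

end Alternating

variable {r : ℕ}

noncomputable def staircase (r : ℕ) : Fin r →₀ ℕ :=
  Finsupp.equivFunOnFinite.symm fun i => r - 1 - i

theorem vandermondeMv_eq_det :
    vandermondeMv r =
      (Matrix.vandermonde fun i : Fin r => (X i.rev : MvPolynomial (Fin r) ℤ)).det := by
  rw [Matrix.det_vandermonde, vandermondeMv, Finset.prod_sigma']
  refine prod_nbij' (fun p => ⟨p.2.rev, p.1.rev⟩) (fun x => (x.2.rev, x.1.rev)) ?_ ?_ ?_ ?_ ?_ <;>
    simp [Fin.rev_lt_rev]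

theorem vandermondeMv_eq_sum_sign_monomial :
    vandermondeMv r = ∑ σ : Perm (Fin r),
      (Perm.sign σ : ℤ) • monomial ((staircase r).mapDomain σ) (1 : ℤ) := by
  rw [vandermondeMv_eq_det, ← Matrix.det_submatrix_equiv_self Fin.revPerm, Matrix.det_apply]
  refine sum_congr rfl fun σ _ => ?_
  rw [Units.smul_def, ← rename_monomial, monomial_eq, Finsupp.prod_fintype _ _ (by simp)]
  simp only [Matrix.vandermonde, staircase]
  simp [Nat.sub_sub, add_comm]

theorem isAlternating_vandermondeMv : IsAlternating (vandermondeMv r) := fun π => by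
  rw [vandermondeMv_eq_sum_sign_monomial, map_sum, smul_sum]
  refine Fintype.sum_equiv (Equiv.mulLeft π) _ _ fun σ => ?_
  have hsign : (Perm.sign π : ℤ) * Perm.sign (π * σ) = Perm.sign σ := by
    rw [Perm.sign_mul, Units.val_mul, ← mul_assoc, ← Units.val_mul, Int.units_mul_self,
      Units.val_one, one_mul]
  simp only [map_zsmul, rename_monomial, coe_mulLeft, Perm.coe_mul, Finsupp.mapDomain_comp,
    smul_smul, hsign]

theorem isHomogeneous_vandermondeMv :
    (vandermondeMv r).IsHomogeneous (staircase r).degree := by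
  rw [vandermondeMv_eq_sum_sign_monomial]
  refine IsHomogeneous.sum _ _ _ fun σ _ => ?_
  rw [smul_monomial]
  exact isHomogeneous_monomial _ (Finsupp.degree_mapDomain _ _)

theorem coeff_vandermondeMv_mul (T : MvPolynomial (Fin r) ℤ) (e : Fin r →₀ ℕ) :
    coeff e (vandermondeMv r * T) = ∑ σ : Perm (Fin r), (Perm.sign σ : ℤ) *
      if (staircase r).mapDomain σ ≤ e then coeff (e - (staircase r).mapDomain σ) T else 0 := by
  simp only [vandermondeMv_eq_sum_sign_monomial, sum_mul, coeff_sum, smul_mul_assoc, coeff_smul,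
    coeff_monomial_mul', one_mul, smul_eq_mul]

noncomputable def shifted (f : Fin r → ℕ) : Fin r →₀ ℕ :=
  Finsupp.equivFunOnFinite.symm f + staircase r

@[simp]
theorem shifted_apply (f : Fin r → ℕ) (i : Fin r) : shifted f i = f i + (r - 1 - i) := rfl

theorem _root_.Antitone.strictAnti_shifted {f : Fin r → ℕ} (hf : Antitone f) :
    StrictAnti (shifted f) :=
  fun i j hij => by
    have := hf hij.le
    have := Fin.lt_def.mp hij
    simp only [shifted_apply]
    omega

theorem _root_.StrictAnti.exists_antitone_shifted_eq {g : Fin r → ℕ} (hg : StrictAnti g) :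
    ∃ f, Antitone f ∧ ⇑(shifted f) = g := by
  have hanti : Antitone fun i : Fin r => g i + i := by
    cases r with
    | zero => exact fun i => i.elim0
    | succ n =>
      refine Fin.antitone_iff_succ_le.mpr fun i => ?_
      have := Fin.strictAnti_iff_succ_lt.mp hg i
      simp only [Fin.val_succ, Fin.val_castSucc]
      omega
  have hbound (i : Fin r) : r - 1 ≤ g i + i := by
    have hlast : i ≤ ⟨r - 1, Nat.sub_one_lt_of_lt i.isLt⟩ :=
      Fin.le_def.mpr (Nat.le_sub_one_of_lt i.isLt)
    have := hanti hlast
    simp only at this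
    omega
  refine ⟨fun i => g i + i - (r - 1), fun i j hij => Nat.sub_le_sub_right (hanti hij) _, ?_⟩
  funext i
  have := hbound i
  have := i.isLt
  simp only [shifted_apply]
  omega

theorem exists_antitone_mapDomain_shifted_eq {a : Fin r →₀ ℕ} (ha : Function.Injective a) :
    ∃ (f : Fin r → ℕ) (σ : Perm (Fin r)), Antitone f ∧ (shifted f).mapDomain σ = a := by
  set σ : Perm (Fin r) := Fin.revPerm.trans (Tuple.sort a)
  have hg : StrictAnti (a ∘ σ) :=
    ((Tuple.monotone_sort a).comp_antitone Fin.rev_anti).strictAnti_of_injective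
      (ha.comp σ.injective)
  obtain ⟨f, hf, hfg⟩ := hg.exists_antitone_shifted_eq
  refine ⟨f, σ, hf, Finsupp.ext fun j => ?_⟩
  rw [Finsupp.mapDomain_equiv_apply, hfg]
  simp

theorem eq_and_eq_of_mapDomain_shifted_eq {f f' : Fin r → ℕ} {σ σ' : Perm (Fin r)}
    (hf : Antitone f) (hf' : Antitone f')
    (h : (shifted f).mapDomain σ = (shifted f').mapDomain σ') : f = f' ∧ σ = σ' := by
  have hcoe := congrArg DFunLike.coe h
  rw [coe_mapDomain_equiv, coe_mapDomain_equiv] at hcoe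
  have hshift : ⇑(shifted f) = shifted f' := by
    refine (hf.strictAnti_shifted.range_inj hf'.strictAnti_shifted).mp ?_
    rw [← σ.symm.surjective.range_comp, hcoe, σ'.symm.surjective.range_comp]
  refine ⟨funext fun i => by simpa using congrFun hshift i, ?_⟩
  rw [hshift] at hcoe
  exact symm_bijective.injective
    (DFunLike.coe_injective (hf'.strictAnti_shifted.injective.comp_left hcoe))

theorem le_of_mapDomain_shifted_le {f : Fin r → ℕ} (hf : Antitone f) {σ : Perm (Fin r)} {q : ℕ}
    (h : (shifted f).mapDomain σ ≤ shifted fun _ => q) (i : Fin r) : f i ≤ q := by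
  have hfirst := h (σ ⟨0, i.pos⟩)
  have hanti := hf (show (⟨0, i.pos⟩ : Fin r) ≤ i from Fin.le_def.mpr (Nat.zero_le _))
  rw [Finsupp.mapDomain_equiv_apply] at hfirst
  simp only [symm_apply_apply, shifted_apply] at hfirst
  omega

theorem sum_filter_injective_antidiagonal {M : Type*} [AddCommMonoid M] (q : ℕ)
    (F : (Fin r →₀ ℕ) × (Fin r →₀ ℕ) → M) :
    ∑ x ∈ (antidiagonal (shifted fun _ : Fin r => q)).filter (fun x => Function.Injective x.1), F x
      = ∑ f ∈ univ.filter (fun f : Fin r → Fin (q + 1) => Antitone fun i => (f i : ℕ)),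
          ∑ σ : Perm (Fin r),
            if (shifted fun i => (f i : ℕ)).mapDomain σ ≤ shifted fun _ => q then
              F ((shifted fun i => (f i : ℕ)).mapDomain σ,
                (shifted fun _ => q) - (shifted fun i => (f i : ℕ)).mapDomain σ)
            else 0 := by
  set box : Fin r →₀ ℕ := shifted fun _ => q
  rw [← sum_product', ← sum_filter]
  symm
  refine sum_nbij (fun y => ((shifted fun i => (y.1 i : ℕ)).mapDomain y.2,
    box - (shifted fun i => (y.1 i : ℕ)).mapDomain y.2)) ?_ ?_ ?_ fun _ _ => rfl
  · rintro ⟨f, σ⟩ hy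
    simp only [mem_filter, mem_product, mem_univ, true_and, and_true] at hy
    simp only [mem_filter, HasAntidiagonal.mem_antidiagonal, coe_mapDomain_equiv]
    exact ⟨add_tsub_cancel_of_le hy.2, hy.1.strictAnti_shifted.injective.comp σ.symm.injective⟩
  · rintro ⟨f, σ⟩ hy ⟨f', σ'⟩ hy' heq
    simp only [mem_coe, mem_product, mem_filter, mem_univ, true_and, and_true] at hy hy'
    obtain ⟨hff', rfl⟩ := eq_and_eq_of_mapDomain_shifted_eq hy.1 hy'.1 (Prod.ext_iff.mp heq).1
    exact Prod.ext (funext fun i => Fin.ext (congrFun hff' i)) rfl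
  · rintro ⟨a, b⟩ hx
    simp only [mem_coe, mem_filter, HasAntidiagonal.mem_antidiagonal] at hx
    obtain ⟨f, σ, hf, rfl⟩ := exists_antitone_mapDomain_shifted_eq hx.2
    have hle : (shifted f).mapDomain σ ≤ box := hx.1 ▸ le_self_add
    refine ⟨(fun i => ⟨f i, Nat.lt_succ_of_le (le_of_mapDomain_shifted_le hf hle i)⟩, σ), ?_, ?_⟩
    · simpa [hf] using hle
    · exact Prod.ext rfl (hx.1 ▸ add_tsub_cancel_left _ b)

def boxComplement (q : ℕ) (f : Fin r → ℕ) : Fin r → ℕ := fun j => q - f j.rev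

def revConjInv (τ : Perm (Fin r)) : Perm (Fin r) := Fin.revPerm * τ⁻¹ * Fin.revPerm

theorem revConjInv_involutive : Function.Involutive (revConjInv (r := r)) := fun τ => by
  ext
  simp [revConjInv]

theorem sign_revConjInv (τ : Perm (Fin r)) : Perm.sign (revConjInv τ) = Perm.sign τ := by
  simp only [revConjInv, Perm.sign_mul, Perm.sign_inv, mul_right_comm _ (Perm.sign τ),
    Int.units_mul_self, one_mul]

theorem val_revConjInv_apply (τ : Perm (Fin r)) (i : Fin r) :
    (revConjInv τ i : ℕ) = r - 1 - τ.symm i.rev := by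
  simp only [revConjInv, Perm.coe_mul, Function.comp_apply, Fin.revPerm_apply, Fin.val_rev,
    Perm.inv_def]
  omega

theorem coeff_shifted_boxComplement {T : MvPolynomial (Fin r) ℤ} (hT : T.IsSymmetric) {q : ℕ}
    {f : Fin r → ℕ} (hfq : ∀ i, f i ≤ q) :
    coeff (shifted (boxComplement q f)) (vandermondeMv r * T)
      = ∑ σ : Perm (Fin r), (Perm.sign σ : ℤ) *
          if (shifted f).mapDomain σ ≤ shifted (fun _ => q)
          then coeff (shifted (fun _ => q) - (shifted f).mapDomain σ) T else 0 := by
  rw [coeff_vandermondeMv_mul]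
  -- With `w₀ = Fin.revPerm`, `τ ↦ w₀ τ⁻¹ w₀` matches the terms of the two sums: the exponents
  -- of `T` in matched terms differ by the permutation `σ ∘ w₀`, which `T` does not see.
  refine Fintype.sum_bijective revConjInv revConjInv_involutive.bijective _ _ fun τ => ?_
  set σ := revConjInv τ
  have hσ (i : Fin r) : (σ i : ℕ) = r - 1 - τ.symm i.rev := val_revConjInv_apply τ i
  have hcond : (staircase r).mapDomain τ ≤ shifted (boxComplement q f) ↔
      (shifted f).mapDomain σ ≤ shifted (fun _ => q) := by
    rw [Finsupp.le_def, Finsupp.le_def]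
    refine (Fin.revPerm.trans σ).forall_congr fun m => ?_
    obtain ⟨i, rfl⟩ := Fin.rev_surjective m
    simp only [Finsupp.mapDomain_equiv_apply, trans_apply, Fin.revPerm_apply, Fin.rev_rev,
      symm_apply_apply, shifted_apply, staircase, boxComplement, Finsupp.coe_equivFunOnFinite_symm,
      Fin.val_rev]
    have := hσ i
    have := hfq i
    have := (τ.symm i.rev).isLt
    omega
  have hdiff : shifted (fun _ => q) - (shifted f).mapDomain σ =
        (shifted (boxComplement q f) - (staircase r).mapDomain τ).mapDomain
          (Fin.revPerm.trans σ) := by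
    ext j
    obtain ⟨i, rfl⟩ := σ.surjective j
    simp only [Finsupp.tsub_apply, Finsupp.mapDomain_equiv_apply, symm_trans_apply,
      symm_apply_apply, Fin.revPerm_symm, Fin.revPerm_apply, shifted_apply, staircase,
      boxComplement, Finsupp.coe_equivFunOnFinite_symm, Fin.val_rev, Fin.rev_rev]
    have := hσ i
    have := hfq i
    have := (τ.symm i.rev).isLt
    omega
  rw [sign_revConjInv, hdiff, hT.coeff_mapDomain, if_congr hcond rfl rfl]

theorem coeff_shifted_const_mul {A T : MvPolynomial (Fin r) ℤ} (hA : IsAlternating A)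
    (hT : T.IsSymmetric) (q : ℕ) :
    coeff (shifted fun _ => q) (A * T)
      = ∑ f ∈ univ.filter (fun f : Fin r → Fin (q + 1) => Antitone fun i => (f i : ℕ)),
          coeff (shifted fun i => (f i : ℕ)) A
            * coeff (shifted (boxComplement q fun i => (f i : ℕ))) (vandermondeMv r * T) := by
  rw [coeff_mul, ← sum_filter_of_ne (p := fun x => Function.Injective x.1),
    sum_filter_injective_antidiagonal]
  · refine sum_congr rfl fun f _ => ?_
    rw [coeff_shifted_boxComplement hT fun i => Nat.lt_succ_iff.mp (f i).isLt, mul_sum]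
    refine sum_congr rfl fun σ _ => ?_
    rw [hA.coeff_mapDomain]
    split_ifs <;> ring
  · intro x _ hx
    by_contra hinj
    exact hx (by rw [hA.coeff_eq_zero_of_not_injective hinj, zero_mul])

theorem coeff_shifted_vandermondeMv_mul_eq_zero {S : MvPolynomial (Fin r) ℤ} {k : ℕ}
    (hS : S.IsHomogeneous k) {f : Fin r → ℕ} (hf : ∑ i, f i ≠ k) :
    coeff (shifted f) (vandermondeMv r * S) = 0 := by
  refine (isHomogeneous_vandermondeMv.mul hS).coeff_eq_zero ?_
  rw [shifted, map_add, Finsupp.degree_eq_sum (Finsupp.equivFunOnFinite.symm f), add_comm]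
  simpa using hf

theorem isSymmetric_prod_map_powerSumMv (r : ℕ) (μ : Multiset ℕ) :
    ((μ.map (powerSumMv r)).prod).IsSymmetric :=
  multiset_prod_mem (S := symmetricSubalgebra (Fin r) ℤ) _ fun _ ha => by
    obtain ⟨a, -, rfl⟩ := Multiset.mem_map.mp ha
    exact psum_isSymmetric (Fin r) ℤ a

theorem isHomogeneous_prod_map_powerSumMv (r : ℕ) (μ : Multiset ℕ) :
    ((μ.map (powerSumMv r)).prod).IsHomogeneous μ.sum := by
  induction μ using Multiset.induction_on with
  | empty => simpa using isHomogeneous_one (Fin r) ℤ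
  | cons a μ ih =>
    rw [Multiset.map_cons, Multiset.prod_cons, Multiset.sum_cons]
    exact (IsHomogeneous.sum _ _ _ fun i _ => isHomogeneous_X_pow i a).mul ih

theorem symChar_ofFn (g : Fin r → ℕ) (μ : Multiset ℕ) :
    symChar (List.ofFn g) μ
      = coeff (shifted g) (vandermondeMv r * (μ.map (powerSumMv r)).prod) := by
  suffices ∀ (L : List ℕ) (h : L.length = r), (∀ i, L.get (i.cast h.symm) = g i) →
      symChar L μ = coeff (shifted g) (vandermondeMv r * (μ.map (powerSumMv r)).prod) from
    this _ (List.length_ofFn) (by simp)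
  rintro L rfl hL
  rw [symChar]
  congr 1
  ext i
  simp [← hL]

end RectangularCharacter

open RectangularCharacter in
open scoped Classical in
theorem rectangular_character_as_sum_over_contained_partitions_general
    (p q k : ℕ) (μ : Nat.Partition k) :
    symChar (List.replicate p q) (μ.parts + Multiset.replicate (p * q - k) 1)
      = ∑ f ∈ Finset.univ.filter
            (fun f : Fin p → Fin (q + 1) =>
              (Antitone fun i => (f i : ℕ)) ∧ ∑ i, (f i : ℕ) = k),
          symChar (List.ofFn fun i => (f i : ℕ)) μ.parts
            * symChar (List.ofFn fun i : Fin p => q - (f i.rev : ℕ))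
                (Multiset.replicate (p * q - k) 1) := by
  have hS := isSymmetric_prod_map_powerSumMv p μ.parts
  have hT := isSymmetric_prod_map_powerSumMv p (Multiset.replicate (p * q - k) 1)
  have hSk := μ.parts_sum ▸ isHomogeneous_prod_map_powerSumMv p μ.parts
  rw [← List.ofFn_const, symChar_ofFn, Multiset.map_add, Multiset.prod_add, ← mul_assoc,
    coeff_shifted_const_mul (isAlternating_vandermondeMv.mul_isSymmetric hS) hT]
  simp only [symChar_ofFn]
  rw [← Finset.filter_filter,
    Finset.sum_filter_of_ne (p := fun f : Fin p → Fin (q + 1) => ∑ i, (f i : ℕ) = k)]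
  · rfl
  · intro f _ hf
    by_contra hk
    rw [coeff_shifted_vandermondeMv_mul_eq_zero hSk hk, zero_mul] at hf
    exact hf rfl

open scoped Classical in
/-- For `p, q ≥ 1` and `μ ⊢ k` with `k ≤ pq`:
`χ^{p×q}(μ,1^{pq-k}) = ∑_{λ ⊆ p×q, λ ⊢ k} χ^λ(μ) f^{λ̃}`, where a partition `λ ⊆ p×q` is
encoded as an antitone function `f : Fin p → Fin (q+1)` (its parts, zeros allowed), the
complement is `λ̃_i = q - λ_{p+1-i}`, and `f^ν = χ^ν(1^N)` counts standard Young tableaux. -/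
theorem rectangular_character_as_sum_over_contained_partitions
    (p q k : ℕ) (hp : 1 ≤ p) (hq : 1 ≤ q) (hk : k ≤ p * q) (μ : Nat.Partition k) :
    symChar (List.replicate p q) (μ.parts + Multiset.replicate (p * q - k) 1)
      = ∑ f ∈ Finset.univ.filter
            (fun f : Fin p → Fin (q + 1) =>
              (Antitone fun i => (f i : ℕ)) ∧ ∑ i, (f i : ℕ) = k),
          symChar (List.ofFn fun i => (f i : ℕ)) μ.parts
            * symChar (List.ofFn fun i : Fin p => q - (f i.rev : ℕ))
                (Multiset.replicate (p * q - k) 1) :=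
  rectangular_character_as_sum_over_contained_partitions_general p q k μ
end

section
/- For m = 1, write G_k(p;q) for the leading-terms polynomial of F_k(p;q). Then for every k ≥ 1, (−1)^k G_k(p; −q) = Σ_{i=1}^k N(k,i) p^{k+1−i} q^i, where N(k,i) = (1/k)·binom(k,i)·binom(k,i−1) is the Narayana number. -/
/-!
Dividing `N = (x)_k (x - q - p)_k` by the monic `D = (x - q)_k` leaves a remainder of degree
`< k` that agrees with `N` at the roots `q, q + 1, …, q + k - 1` of `D`. The coefficient
`[x⁻¹] N/D` is the `x^(k-1)`-coefficient of that remainder, hence a `(k-1)`-st finite difference: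
`F_k(p;q) = -(1/k!) ∑_j (-1)^(k-1-j) C(k-1,j) (q + j)_k (j - p)_k`.
Substituting `(t p, -t q)` and taking the coefficient of `t^(k+1)` gives `G_k(p;-q)`. By Taylor
expansion of both falling factorials, this coefficient is again a finite difference, now of a
polynomial in `j` of degree `k - 1` with leading coefficient
`(-1)^(k+1) ∑_{a+b=k+1} C(k,a) C(k,b) q^a p^b`, which is `(-1)^(k+1) k` times the Narayana sum.
-/

open Polynomial

/-- `[x^{-1}] R(x)`: the coefficient of `x^{-1}` in the expansion of the rational
function `N(x)/D(x)` in descending powers of `x` (Taylor series at `x = ∞`). -/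
noncomputable def coeffXinv (N D : Polynomial ℚ) : ℚ :=
  PowerSeries.coeff (R := ℚ) (1 + N.natDegree - D.natDegree)
    ((N.reverse : PowerSeries ℚ) * (D.reverse : PowerSeries ℚ)⁻¹)

open Finset
open scoped Nat

theorem PowerSeries.coeff_mul_of_forall_coeff_eq_zero {R : Type*} [CommSemiring R]
    {f g : PowerSeries R} {m : ℕ} (hf : ∀ i < m, coeff i f = 0) :
    coeff m (f * g) = coeff m f * constantCoeff g := by
  rw [coeff_mul, sum_eq_single (m, 0)]
  · simp
  · rintro ⟨i, j⟩ hij hne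
    rw [HasAntidiagonal.mem_antidiagonal] at hij
    rw [hf i (by grind), zero_mul]
  · simp

theorem sum_antidiagonal_choose_mul_choose_mul_pow {S : Type*} [CommSemiring S] (k : ℕ)
    (x y : S) :
    ∑ ab ∈ antidiagonal (k + 1), (k.choose ab.1 * k.choose ab.2 * x ^ ab.1 * y ^ ab.2 : S)
      = ∑ i ∈ Icc 1 k, (k.choose i * k.choose (i - 1) * y ^ (k + 1 - i) * x ^ i : S) := by
  rw [Nat.sum_antidiagonal_eq_sum_range_succ_mk, sum_range_succ, sum_range_succ',
    Nat.choose_succ_self, Nat.sub_zero, Nat.choose_succ_self, ← Ico_add_one_right_eq_Icc,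
    sum_Ico_eq_sum_range]
  simp only [Nat.cast_zero, mul_zero, zero_mul, add_zero, Nat.add_sub_cancel]
  refine sum_congr rfl fun i hi ↦ ?_
  rw [Nat.choose_symm_of_eq_add (show k = (k + 1 - (i + 1)) + i by simp at hi; omega),
    add_comm 1 i, Nat.add_sub_cancel]
  ring

namespace MvPolynomial

variable {σ R : Type*}

theorem coeff_aeval_C_mul_X [CommSemiring R] (v : σ → R) (F : MvPolynomial σ R) (d : ℕ) :
    (aeval (fun i ↦ Polynomial.C (v i) * Polynomial.X) F).coeff d
      = eval v (homogeneousComponent d F) := by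
  induction F using MvPolynomial.induction_on' with
  | monomial s c =>
    have hs : aeval (fun i ↦ Polynomial.C (v i) * Polynomial.X) (monomial s c)
        = Polynomial.C (eval v (monomial s c)) * Polynomial.X ^ s.degree := by
      simp only [aeval_monomial, eval_monomial, Polynomial.algebraMap_apply,
        Algebra.algebraMap_self, RingHom.id_apply, mul_pow, Finsupp.prod_mul, Polynomial.C_mul,
        map_finsuppProd, Polynomial.C_pow, mul_assoc]
      simp only [Finsupp.prod, Finset.prod_pow_eq_pow_sum]
      rfl
    rw [hs, homogeneousComponent_of_mem (isHomogeneous_monomial c rfl),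
      Polynomial.coeff_C_mul_X_pow]
    split_ifs <;> simp
  | add F G hF hG => simp [hF, hG]

theorem eval_homogeneousComponent_eq_coeff [CommRing R] [IsDomain R] [Infinite R]
    {F : MvPolynomial σ R} {v : σ → R} {Φ : R[X]} (h : ∀ t : R, eval (t • v) F = Φ.eval t)
    (d : ℕ) : eval v (homogeneousComponent d F) = Φ.coeff d := by
  rw [← coeff_aeval_C_mul_X]
  congr 1
  refine Polynomial.funext fun t ↦ ?_
  rw [← h, ← Polynomial.coe_aeval_eq_eval, ← AlgHom.comp_apply, comp_aeval, ← aeval_eq_eval]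
  congr 2
  funext i
  rw [map_mul, Polynomial.aeval_C, Polynomial.aeval_X, Pi.smul_apply, smul_eq_mul, mul_comm]
  rfl

end MvPolynomial

namespace Polynomial

variable {R : Type*} [CommRing R]

theorem fwdDiff_iter_eval_eq_factorial_mul_coeff {P : R[X]} {n : ℕ} (hP : P.natDegree ≤ n)
    (x : R) : (fwdDiff 1)^[n] P.eval x = n ! * P.coeff n := by
  rcases hP.lt_or_eq with hlt | rfl
  · rw [fwdDiff_iter_eq_zero_of_degree_lt hlt, coeff_eq_zero_of_natDegree_lt hlt]; simp
  · rw [fwdDiff_iter_degree_eq_factorial, Pi.smul_apply, smul_eq_mul, mul_comm]; rfl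

theorem sum_range_alternating_choose_mul_eval {P : R[X]} {n : ℕ} (hP : P.natDegree ≤ n)
    (x : R) :
    ∑ j ∈ range (n + 1), (-1) ^ (n - j) * n.choose j * P.eval (x + j) = n ! * P.coeff n := by
  rw [← fwdDiff_iter_eval_eq_factorial_mul_coeff hP x, fwdDiff_iter_eq_sum_shift]
  simp [zsmul_eq_mul]

theorem coeff_comp_C_add_C_mul_X (P : R[X]) (x r : R) (m : ℕ) :
    (P.comp (C x + C r * X)).coeff m = r ^ m * (hasseDeriv m P).eval x := by
  have : P.comp (C x + C r * X) = (taylor x P).comp (C r * X) := by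
    rw [taylor_apply, comp_assoc, add_comp, X_comp, C_comp, add_comm]
  rw [this, comp_C_mul_X_coeff, taylor_coeff, mul_comm]

theorem coeff_comp_mul_comp (P Q : R[X]) (x r s : R) (m : ℕ) :
    (P.comp (C x + C r * X) * Q.comp (C x + C s * X)).coeff m
      = (∑ ab ∈ antidiagonal m,
          C (r ^ ab.1 * s ^ ab.2) * (hasseDeriv ab.1 P * hasseDeriv ab.2 Q)).eval x := by
  rw [coeff_mul, eval_finsetSum]
  refine sum_congr rfl fun ab _ ↦ ?_
  rw [coeff_comp_C_add_C_mul_X, coeff_comp_C_add_C_mul_X, eval_mul, eval_C, eval_mul]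
  ring

section hasseDeriv_mul

variable {P : R[X]} {n a b : ℕ}

theorem natDegree_hasseDeriv_mul_hasseDeriv_le (hP : P.natDegree ≤ n + 1)
    (hab : a + b = n + 2) : (hasseDeriv a P * hasseDeriv b P).natDegree ≤ n := by
  by_cases ha : n + 1 < a
  · simp [hasseDeriv_eq_zero_of_lt_natDegree P a (by omega)]
  by_cases hb : n + 1 < b
  · simp [hasseDeriv_eq_zero_of_lt_natDegree P b (by omega)]
  refine natDegree_mul_le.trans ?_
  have := natDegree_hasseDeriv_le P a
  have := natDegree_hasseDeriv_le P b
  omega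

theorem coeff_hasseDeriv_mul_hasseDeriv (hP : P.natDegree ≤ n + 1) (hab : a + b = n + 2) :
    (hasseDeriv a P * hasseDeriv b P).coeff n
      = (n + 1).choose a * (n + 1).choose b * P.coeff (n + 1) ^ 2 := by
  by_cases ha : n + 1 < a
  · simp [hasseDeriv_eq_zero_of_lt_natDegree P a (by omega), Nat.choose_eq_zero_of_lt ha]
  by_cases hb : n + 1 < b
  · simp [hasseDeriv_eq_zero_of_lt_natDegree P b (by omega), Nat.choose_eq_zero_of_lt hb]
  have hdeg (c : ℕ) : (hasseDeriv c P).natDegree ≤ n + 1 - c :=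
    (natDegree_hasseDeriv_le P c).trans (Nat.sub_le_sub_right hP c)
  have hcoeff (c : ℕ) (hc : c ≤ n + 1) :
      (hasseDeriv c P).coeff (n + 1 - c) = (n + 1).choose c * P.coeff (n + 1) := by
    rw [hasseDeriv_coeff, Nat.sub_add_cancel hc]
  have hn : n = (n + 1 - a) + (n + 1 - b) := by omega
  have := coeff_mul_add_eq_of_natDegree_le (hdeg a) (hdeg b)
  rw [← hn, hcoeff a (by omega), hcoeff b (by omega)] at this
  rw [this]
  ring

theorem sum_range_alternating_choose_mul_coeff_comp_mul_comp (hP : P.natDegree ≤ n + 1)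
    (r s : R) :
    ∑ j ∈ range (n + 1), (-1) ^ (n - j) * n.choose j
        * (P.comp (C (j : R) + C r * X) * P.comp (C (j : R) + C s * X)).coeff (n + 2)
      = n ! * P.coeff (n + 1) ^ 2 * ∑ ab ∈ antidiagonal (n + 2),
          (n + 1).choose ab.1 * (n + 1).choose ab.2 * r ^ ab.1 * s ^ ab.2 := by
  set H := ∑ ab ∈ antidiagonal (n + 2),
    C (r ^ ab.1 * s ^ ab.2) * (hasseDeriv ab.1 P * hasseDeriv ab.2 P)
  have hHdeg : H.natDegree ≤ n := natDegree_sum_le_of_forall_le _ _ fun ab hab ↦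
    (natDegree_C_mul_le _ _).trans
      (natDegree_hasseDeriv_mul_hasseDeriv_le hP (mem_antidiagonal.1 hab))
  have hHcoeff : H.coeff n = P.coeff (n + 1) ^ 2 * ∑ ab ∈ antidiagonal (n + 2),
      (n + 1).choose ab.1 * (n + 1).choose ab.2 * r ^ ab.1 * s ^ ab.2 := by
    rw [finsetSum_coeff, mul_sum]
    refine sum_congr rfl fun ab hab ↦ ?_
    rw [coeff_C_mul, coeff_hasseDeriv_mul_hasseDeriv hP (mem_antidiagonal.1 hab)]
    ring
  have := sum_range_alternating_choose_mul_eval hHdeg 0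
  simp only [zero_add] at this
  simp_rw [coeff_comp_mul_comp]
  rw [this, hHcoeff, mul_assoc]

end hasseDeriv_mul

section IsDomain

variable [IsDomain R]

theorem reverse_eq_reflect_modByMonic_add {N D : R[X]} (hD : D.Monic)
    (hDN : D.natDegree ≤ N.natDegree) (hD1 : D ≠ 1) :
    N.reverse = reflect N.natDegree (N %ₘ D) + D.reverse * (N /ₘ D).reverse := by
  have hDQ : D * (N /ₘ D) = N - N %ₘ D := by
    rw [eq_sub_iff_add_eq, add_comm, modByMonic_add_div N D]
  have hDQ_deg : (D * (N /ₘ D)).natDegree = N.natDegree := by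
    rw [hDQ, natDegree_sub_eq_left_of_natDegree_lt]
    exact (natDegree_modByMonic_lt N hD hD1).trans_le hDN
  rw [← reverse_mul_of_domain, reverse, reverse, hDQ_deg, ← reflect_add, hDQ, add_sub_cancel]

theorem monic_descPochhammer_comp_X_sub_C (k : ℕ) (b : R) :
    ((descPochhammer R k).comp (X - C b)).Monic :=
  (monic_descPochhammer R k).comp (monic_X_sub_C b) (by rw [natDegree_X_sub_C]; exact one_ne_zero)

theorem natDegree_descPochhammer_comp_X_sub_C (k : ℕ) (b : R) :
    ((descPochhammer R k).comp (X - C b)).natDegree = k := by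
  rw [natDegree_comp, descPochhammer_natDegree, natDegree_X_sub_C, mul_one]

theorem factorial_mul_coeff_modByMonic_descPochhammer_comp (N : R[X]) (n : ℕ) (b : R) :
    n ! * (N %ₘ (descPochhammer R (n + 1)).comp (X - C b)).coeff n
      = ∑ j ∈ range (n + 1), (-1) ^ (n - j) * n.choose j * N.eval (b + j) := by
  set D := (descPochhammer R (n + 1)).comp (X - C b)
  have hD : D.Monic := monic_descPochhammer_comp_X_sub_C (n + 1) b
  have hDdeg : D.natDegree = n + 1 := natDegree_descPochhammer_comp_X_sub_C (n + 1) b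
  have hdeg : (N %ₘ D).natDegree ≤ n := by
    have := natDegree_modByMonic_lt N hD (fun h ↦ by simp [h] at hDdeg)
    omega
  rw [← sum_range_alternating_choose_mul_eval hdeg b]
  refine sum_congr rfl fun j hj ↦ ?_
  have hroot : D.eval (b + j) = 0 := by
    rw [eval_comp, eval_sub, eval_X, eval_C, add_sub_cancel_left,
      descPochhammer_eval_coe_nat_of_lt (by simpa using hj)]
  congr 1
  exact eval₂_modByMonic_eq_self_of_root hroot

end IsDomain

end Polynomial

theorem coeffXinv_eq_coeff_modByMonic {N D : ℚ[X]} (hD : D.Monic) (hD1 : 1 ≤ D.natDegree)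
    (hDN : D.natDegree ≤ N.natDegree) :
    coeffXinv N D = (N %ₘ D).coeff (D.natDegree - 1) := by
  have hD1' : D ≠ 1 := by rintro rfl; simp at hD1
  have hR := natDegree_modByMonic_lt N hD hD1'
  have hQ : (N /ₘ D).reverse.natDegree < 1 + N.natDegree - D.natDegree :=
    ((N /ₘ D).reverse_natDegree_le.trans (natDegree_divByMonic N hD).le).trans_lt (by omega)
  have hDrev : PowerSeries.constantCoeff (D.reverse : PowerSeries ℚ) = 1 := by
    rw [← PowerSeries.coeff_zero_eq_constantCoeff_apply, coeff_coe, coeff_zero_reverse,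
      hD.leadingCoeff]
  rw [coeffXinv, reverse_eq_reflect_modByMonic_add hD hDN hD1', Polynomial.coe_add,
    Polynomial.coe_mul, add_mul, mul_comm (D.reverse : PowerSeries ℚ), mul_assoc,
    PowerSeries.mul_inv_cancel _ (by simp [hDrev]), mul_one, map_add,
    coeff_coe (N /ₘ D).reverse, coeff_eq_zero_of_natDegree_lt hQ, add_zero,
    PowerSeries.coeff_mul_of_forall_coeff_eq_zero, PowerSeries.constantCoeff_inv, hDrev]
  · simp only [coeff_coe, coeff_reflect, inv_one, mul_one]
    rw [revAt_le (by omega)]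
    congr 1
    omega
  · intro i hi
    rw [coeff_coe, coeff_reflect, revAt_le (by omega)]
    exact coeff_eq_zero_of_natDegree_lt (by omega)

/-- The paper's `F_k(p;q)`. -/
noncomputable def normalizedCharacter (k : ℕ) (p q : ℚ) : ℚ :=
  -(1 / (k : ℚ)) * coeffXinv
    (descPochhammer ℚ k * (descPochhammer ℚ k).comp (X - C (q + p)))
    ((descPochhammer ℚ k).comp (X - C q))

theorem normalizedCharacter_succ (n : ℕ) (p q : ℚ) :
    normalizedCharacter (n + 1) p q = -(1 / (n + 1)! : ℚ) *
      ∑ j ∈ range (n + 1), (-1) ^ (n - j) * n.choose j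
        * ((descPochhammer ℚ (n + 1)).eval (q + j)
          * (descPochhammer ℚ (n + 1)).eval (j - p)) := by
  rw [normalizedCharacter]
  set P := descPochhammer ℚ (n + 1)
  have hP : P.Monic := monic_descPochhammer ℚ (n + 1)
  have hN : (P * P.comp (X - C (q + p))).natDegree = 2 * (n + 1) := by
    rw [natDegree_mul hP.ne_zero (monic_descPochhammer_comp_X_sub_C _ _).ne_zero,
      descPochhammer_natDegree, natDegree_descPochhammer_comp_X_sub_C]
    ring
  have hN_eval (j : ℕ) :
      P.eval (q + j) * P.eval (j - p) = (P * P.comp (X - C (q + p))).eval (q + j) := by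
    rw [eval_mul, eval_comp, eval_sub, eval_X, eval_C, show q + j - (q + p) = (j : ℚ) - p by ring]
  rw [coeffXinv_eq_coeff_modByMonic (monic_descPochhammer_comp_X_sub_C _ q)
    (by rw [natDegree_descPochhammer_comp_X_sub_C]; omega)
    (by rw [hN, natDegree_descPochhammer_comp_X_sub_C]; omega),
    natDegree_descPochhammer_comp_X_sub_C, Nat.add_sub_cancel]
  simp_rw [hN_eval]
  rw [← factorial_mul_coeff_modByMonic_descPochhammer_comp, Nat.factorial_succ]
  push_cast
  field_simp

theorem eval_homogeneousComponent_succ_eq_narayana_sum {k : ℕ} (hk : 1 ≤ k)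
    {F : MvPolynomial (Fin 2) ℚ}
    (hF : ∀ p q, MvPolynomial.eval ![p, q] F = normalizedCharacter k p q) (p q : ℚ) :
    MvPolynomial.eval ![p, -q] (MvPolynomial.homogeneousComponent (k + 1) F)
      = (-1) ^ k * ∑ i ∈ Icc 1 k,
          (k.choose i * k.choose (i - 1) / k : ℚ) * p ^ (k + 1 - i) * q ^ i := by
  obtain ⟨n, rfl⟩ := Nat.exists_eq_add_of_le' hk
  set P := descPochhammer ℚ (n + 1)
  have hscaling (t : ℚ) : MvPolynomial.eval (t • ![p, -q]) F = eval t
      (C (-(1 / (n + 1)! : ℚ)) * ∑ j ∈ range (n + 1), C ((-1) ^ (n - j) * n.choose j : ℚ)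
        * (P.comp (C (j : ℚ) + C (-q) * X) * P.comp (C (j : ℚ) + C (-p) * X))) := by
    rw [Matrix.smul_cons, Matrix.smul_cons, Matrix.smul_empty, hF, normalizedCharacter_succ,
      eval_mul, eval_C, eval_finsetSum]
    congr 1
    refine sum_congr rfl fun j _ ↦ ?_
    simp only [eval_mul, eval_C, eval_comp, eval_add, eval_X, smul_eq_mul]
    rw [show t * -q + (j : ℚ) = j + -q * t by ring, show (j : ℚ) - t * p = j + -p * t by ring]
  have hP1 : P.coeff (n + 1) = 1 := by
    simpa [descPochhammer_natDegree] using (monic_descPochhammer ℚ (n + 1)).coeff_natDegree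
  rw [MvPolynomial.eval_homogeneousComponent_eq_coeff hscaling, coeff_C_mul, finsetSum_coeff]
  simp_rw [coeff_C_mul]
  rw [sum_range_alternating_choose_mul_coeff_comp_mul_comp (descPochhammer_natDegree ℚ _).le,
    hP1, sum_antidiagonal_choose_mul_choose_mul_pow, Nat.factorial_succ, mul_sum, mul_sum,
    mul_sum]
  refine sum_congr rfl fun i hi ↦ ?_
  have hi2 : i ≤ n + 2 := by simp at hi; omega
  rw [neg_pow p, neg_pow q, show (-1 : ℚ) ^ (n + 1) = -(-1) ^ (n + 1 + 1 - i) * (-1) ^ i by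
    rw [neg_mul, ← pow_add, Nat.sub_add_cancel hi2]; ring]
  push_cast
  field_simp

/-- For `m = 1` and `k ≥ 1`, let `F ∈ ℚ[p,q]` be the polynomial (variable `0` is `p`,
variable `1` is `q`) with `F(p;q) = χ̂^{p×q}(k,1^{pq-k}) = -(1/k)[x^{-1}] (x)_k (x-(q+p))_k/(x-q)_k`,
and let `G` be its leading terms (the terms of total degree `k+1`). Then
`(-1)^k G(p;-q) = ∑_{i=1}^k N(k,i) p^{k+1-i} q^i`, where `N(k,i) = (1/k) binom(k,i) binom(k,i-1)`
is a Narayana number. -/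
theorem leading_terms_are_narayana (k : ℕ) (hk : 1 ≤ k) (F : MvPolynomial (Fin 2) ℚ)
    (hF : ∀ pv qv : ℚ,
      MvPolynomial.eval ![pv, qv] F
        = -(1 / (k : ℚ)) * coeffXinv
            (descPochhammer ℚ k *
              (descPochhammer ℚ k).comp (Polynomial.X - Polynomial.C (qv + pv)))
            ((descPochhammer ℚ k).comp (Polynomial.X - Polynomial.C qv))) :
    (-1 : ℚ) ^ k •
        MvPolynomial.bind₁ ![MvPolynomial.X 0, -MvPolynomial.X 1]
          (MvPolynomial.homogeneousComponent (k + 1) F)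
      = ∑ i ∈ Finset.Icc 1 k,
          MvPolynomial.C ((k.choose i : ℚ) * (k.choose (i - 1) : ℚ) / (k : ℚ))
            * MvPolynomial.X 0 ^ (k + 1 - i) * MvPolynomial.X 1 ^ i := by
  refine MvPolynomial.funext fun x ↦ ?_
  have hbind : MvPolynomial.eval x (MvPolynomial.bind₁ ![MvPolynomial.X 0, -MvPolynomial.X 1]
      (MvPolynomial.homogeneousComponent (k + 1) F))
      = MvPolynomial.eval ![x 0, -x 1] (MvPolynomial.homogeneousComponent (k + 1) F) := by
    refine (MvPolynomial.eval₂Hom_bind₁ _ _ _ _).trans ?_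
    congr
    funext i
    fin_cases i <;> simp
  rw [MvPolynomial.smul_eq_C_mul, map_mul, MvPolynomial.eval_C, hbind,
    eval_homogeneousComponent_succ_eq_narayana_sum hk hF, ← mul_assoc, ← mul_pow]
  simp
end
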